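/- arXiv:1903.03868 — 3 statements merged into one kernel-verified Lean document; each statement's English description precedes it below -/
import Mathlib

section
/- Let M be an endoregular R-module. Then M is abelian endoregular if and only if for any two M-generated submodules A, B of M with A ∩ B = 0, we have Hom_R(A, B) = 0. -/
def IsAbelianEndoregular (R M : Type*) [Ring R] [AddCommGroup M] [Module R M] : Prop :=
  (∀ s : Module.End R M, ∃ t : Module.End R M, s * t * s = s) ∧
  (∀ e : Module.End R M, e * e = e → ∀ s : Module.End R M, e * s = s * e)

def IsMGenerated {R M : Type*} [Ring R] [AddCommGroup M] [Module R M]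
    (N : Submodule R M) : Prop :=
  N = ⨆ f : {f : Module.End R M // LinearMap.range f ≤ N}, LinearMap.range f.val

/-!
If `s = s t s` and the idempotents `s t`, `t s` are central, then `g s = g (s t) s = s (t g s)`
for every `g`, and `s ^ 2 = 0` forces `s = s (t s) = t s ^ 2 = 0`. Given `f : A → B` and an
endomorphism `g` with image in `A`, the endomorphism `s = f g` satisfies `ker g ≤ ker s`, while
`g s` lies in `A ∩ B = 0`; hence `s ^ 2 = 0`, so `s = 0`, and `f` vanishes on the `M`-generated
`A`. Conversely, for an idempotent `e` the map `(1 - e) s` sends `range e` into `range (1 - e)`,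
which meets it trivially, so `range e` and likewise `range (1 - e) = ker e` are `s`-invariant,
i.e. `e` commutes with `s`.
-/

open LinearMap

section RegularRing

variable {S : Type*} [Ring S] (hreg : ∀ s : S, ∃ t, s * t * s = s)
  (hcen : ∀ e : S, e * e = e → ∀ s, e * s = s * e)
include hreg hcen

theorem exists_mul_eq_mul_of_regular_of_idempotent_central (g s : S) : ∃ r, g * s = s * r := by
  obtain ⟨t, hst⟩ := hreg s
  have he : s * t * (s * t) = s * t := by rw [← mul_assoc, hst]
  refine ⟨t * g * s, ?_⟩
  calc g * s = g * (s * t) * s := by rw [mul_assoc g, hst]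
    _ = s * (t * g * s) := by rw [← hcen _ he g]; noncomm_ring

theorem eq_zero_of_mul_self_eq_zero_of_regular_of_idempotent_central {s : S} (hs : s * s = 0) :
    s = 0 := by
  obtain ⟨t, hst⟩ := hreg s
  have he : t * s * (t * s) = t * s := by rw [mul_assoc t s, ← mul_assoc s t s, hst]
  calc s = s * t * s := hst.symm
    _ = t * s * s := by rw [mul_assoc, hcen _ he s]
    _ = 0 := by rw [mul_assoc, hs, mul_zero]

end RegularRing

section Module

variable {R M : Type*} [Ring R] [AddCommGroup M] [Module R M]

theorem IsAbelianEndoregular.eq_zero_of_ker_le_of_range_inf_eq_bot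
    (hM : IsAbelianEndoregular R M) {g s : Module.End R M}
    (hker : ker g ≤ ker s) (hrange : range g ⊓ range s = ⊥) : s = 0 := by
  obtain ⟨r, hgs⟩ := exists_mul_eq_mul_of_regular_of_idempotent_central hM.1 hM.2 g s
  have hg : ∀ x, g (s x) = 0 := fun x => by
    have hmem : g (s x) ∈ range g ⊓ range s :=
      ⟨mem_range_self g _, ⟨r x, (congrArg (· x) hgs).symm⟩⟩
    simpa [hrange] using hmem
  refine eq_zero_of_mul_self_eq_zero_of_regular_of_idempotent_central hM.1 hM.2 ?_
  ext x
  exact hker (hg x)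

theorem isMGenerated_range (g : Module.End R M) : IsMGenerated (range g) :=
  le_antisymm (le_iSup_of_le ⟨g, le_rfl⟩ le_rfl) (iSup_le fun f => f.2)

theorem IsMGenerated.linearMap_eq_zero {N : Submodule R M} (hN : IsMGenerated N)
    {P : Type*} [AddCommGroup P] [Module R P] (f : N →ₗ[R] P)
    (h : ∀ (g : Module.End R M) (hg : range g ≤ N) (x : M),
      f ⟨g x, hg (mem_range_self g x)⟩ = 0) :
    f = 0 := by
  have hle : N ≤ (ker f).map N.subtype := hN.le.trans <| iSup_le fun ⟨g, hg⟩ => by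
    rintro _ ⟨x, rfl⟩
    exact ⟨_, h g hg x, rfl⟩
  ext ⟨x, hx⟩
  obtain ⟨y, hy, rfl⟩ := hle hx
  simpa using hy

theorem Submodule.apply_eq_zero_of_forall_linearMap_eq_zero {A B : Submodule R M}
    (hAB : ∀ f : A →ₗ[R] B, f = 0) {u : Module.End R M} (hu : ∀ x ∈ A, u x ∈ B)
    {x : M} (hx : x ∈ A) : u x = 0 :=
  congrArg Subtype.val (LinearMap.congr_fun (hAB (u.restrict hu)) ⟨x, hx⟩)

theorem LinearMap.IsIdempotentElem.range_mem_invtSubmodule_of_forall_linearMap_eq_zero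
    {e : Module.End R M} (he : IsIdempotentElem e)
    (h : ∀ f : range e →ₗ[R] range (1 - e), f = 0) (s : Module.End R M) :
    range e ∈ Module.End.invtSubmodule s := fun x hx => by
  rw [he.range_eq_ker_one_sub, Submodule.mem_comap, mem_ker]
  exact Submodule.apply_eq_zero_of_forall_linearMap_eq_zero h
    (u := (1 - e) * s) (fun y _ => mem_range_self _ (s y)) hx

theorem LinearMap.IsIdempotentElem.commute_of_forall_linearMap_eq_zero
    {e : Module.End R M} (he : IsIdempotentElem e)
    (h₁ : ∀ f : range e →ₗ[R] range (1 - e), f = 0)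
    (h₂ : ∀ f : range (1 - e) →ₗ[R] range e, f = 0) (s : Module.End R M) : Commute e s := by
  refine he.commute_iff.2 ⟨he.range_mem_invtSubmodule_of_forall_linearMap_eq_zero h₁ s, ?_⟩
  rw [he.ker_eq_range_one_sub]
  exact he.one_sub.range_mem_invtSubmodule_of_forall_linearMap_eq_zero
    (by rwa [sub_sub_cancel]) s

end Module

theorem stmt_9 {R M : Type*} [Ring R] [AddCommGroup M] [Module R M]
    (hM : ∀ s : Module.End R M, ∃ t : Module.End R M, s * t * s = s) :
    IsAbelianEndoregular R M ↔
      ∀ A B : Submodule R M, IsMGenerated A → IsMGenerated B → A ⊓ B = ⊥ →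
        ∀ f : A →ₗ[R] B, f = 0 := by
  constructor
  · intro hab A B hA _ hAB f
    refine hA.linearMap_eq_zero f fun g hg x => ?_
    let s : Module.End R M :=
      (B.subtype ∘ₗ f) ∘ₗ g.codRestrict A fun y => hg (mem_range_self g y)
    have hker : ker g ≤ ker s := (ker_codRestrict _ _ _).ge.trans (ker_le_ker_comp _ _)
    have hrange : range g ⊓ range s = ⊥ :=
      eq_bot_iff.2 <| hAB ▸ inf_le_inf hg (by rintro _ ⟨y, rfl⟩; exact (f _).2)
    exact Subtype.ext (congrArg (· x) (hab.eq_zero_of_ker_le_of_range_inf_eq_bot hker hrange))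
  · intro h
    have hcompl : ∀ e : Module.End R M, IsIdempotentElem e →
        ∀ f : range e →ₗ[R] range (1 - e), f = 0 := fun e he =>
      h _ _ (isMGenerated_range e) (isMGenerated_range _)
        (he.ker_eq_range_one_sub ▸ he.isCompl.inf_eq_bot)
    refine ⟨hM, fun e he s => (IsIdempotentElem.commute_of_forall_linearMap_eq_zero he
      (hcompl e he) ?_ s).eq⟩
    have h₂ := hcompl (1 - e) (IsIdempotentElem.one_sub he)
    rwa [sub_sub_cancel] at h₂
end

section
/- Let M be an abelian endoregular R-module and N an M-generated submodule of M. Then N is an abelian endoregular module, i.e., End_R(N) is an abelian von Neumann regular ring. -/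
/-!
Every `x ∈ N` lies in `ε M` for an idempotent `ε ∈ End_R(M)` with `ε M ≤ N` (if `f t f = f` then
`f M = (f t) M`), and since idempotents of `End_R(M)` are central these summands form a directed
family: `ε M + δ M = (ε + δ - ε δ) M`. Transporting `u ∈ End_R(N)` to `End_R(M)` through `ε` is
multiplicative, which makes the idempotents of `End_R(N)` central. For regularity, the group
inverse of the transport of `s` is unique in the abelian regular ring `End_R(M)`, so these inverses
are compatible along the directed family and glue to `t ∈ End_R(N)` with `s t s = s`.
-/

structure IsGroupInverse {A : Type*} [Ring A] (a b : A) : Prop where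
  mul_inv_mul : a * b * a = a
  inv_mul_inv : b * a * b = b
  commute : Commute a b

namespace IsGroupInverse

variable {A : Type*} [Ring A] {a b b' : A}

theorem isIdempotentElem_mul (h : IsGroupInverse a b) : IsIdempotentElem (a * b) := by
  rw [IsIdempotentElem, ← mul_assoc, h.mul_inv_mul]

theorem unique (hcomm : ∀ e : A, IsIdempotentElem e → ∀ s, Commute e s)
    (h : IsGroupInverse a b) (h' : IsGroupInverse a b') : b = b' := by
  have hab : a * b = a * b' := calc
    a * b = a * b' * (a * b) := by rw [← mul_assoc, h'.mul_inv_mul]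
    _ = a * b * (a * b') := (hcomm _ h'.isIdempotentElem_mul _).eq
    _ = a * b' := by rw [← mul_assoc, h.mul_inv_mul]
  calc b = b * (a * b) := by rw [← mul_assoc, h.inv_mul_inv]
    _ = a * b' * b' := by rw [hab, ← mul_assoc, ← h.commute.eq, hab]
    _ = b' := by rw [h'.commute.eq, h'.inv_mul_inv]

theorem mul_right_of_central {e : A} (he : IsIdempotentElem e) (hc : ∀ s, Commute e s)
    (h : IsGroupInverse a b) : IsGroupInverse (a * e) (b * e) := by
  have hmul : ∀ u v : A, u * e * (v * e) = u * v * e := fun u v => by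
    rw [mul_assoc u, ← mul_assoc e, (hc v).eq, mul_assoc v, he.eq, mul_assoc]
  exact ⟨by rw [hmul, hmul, h.mul_inv_mul], by rw [hmul, hmul, h.inv_mul_inv],
    by rw [Commute, SemiconjBy, hmul, hmul, h.commute.eq]⟩

end IsGroupInverse

theorem exists_isGroupInverse {A : Type*} [Ring A] (hreg : ∀ a : A, ∃ t, a * t * a = a)
    (hcomm : ∀ e : A, IsIdempotentElem e → ∀ s, Commute e s) (a : A) :
    ∃ b, IsGroupInverse a b := by
  obtain ⟨t, ht⟩ := hreg a
  have he : IsIdempotentElem (a * t) := by rw [IsIdempotentElem, ← mul_assoc, ht]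
  have hf : IsIdempotentElem (t * a) := by rw [IsIdempotentElem, mul_assoc, ← mul_assoc a, ht]
  -- `a t` and `t a` are central idempotents acting as the identity on `a`, hence they coincide
  have hae : a * (a * t) = a := by rw [← (hcomm _ he a).eq, ht]
  have hfa : t * a * a = a := by rw [(hcomm _ hf a).eq, ← mul_assoc, ht]
  have hef : a * t = t * a := calc
    a * t = t * a * (a * t) := by rw [← mul_assoc, hfa]
    _ = t * a := by rw [mul_assoc, hae]
  have hat : ∀ x, a * (t * (a * x)) = a * x := fun x => by rw [← mul_assoc, ← mul_assoc, ht]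
  have hat' : a * (t * a) = a := by rw [← mul_assoc, ht]
  refine ⟨t * a * t, ?_, ?_, ?_⟩
  · simp only [mul_assoc, hat, hat']
  · simp only [mul_assoc, hat]
  · rw [Commute, SemiconjBy]
    simp only [mul_assoc, hat, hat']
    exact hef

section Idempotents

variable {R M : Type*} [Ring R] [AddCommGroup M] [Module R M]

open LinearMap

theorem Submodule.exists_linearMap_eq_of_directed {ι : Type*} {N : Submodule R M}
    {K : ι → Submodule R M} (hdir : Directed (· ≤ ·) K) (hcover : ∀ x ∈ N, ∃ i, x ∈ K i)
    (g : ι → Module.End R M) (hg : ∀ i j, K i ≤ K j → ∀ x ∈ K i, g i x = g j x)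
    (hgN : ∀ i, ∀ x ∈ K i, g i x ∈ N) :
    ∃ t : Module.End R N, ∀ i, ∀ x : N, (x : M) ∈ K i → (t x : M) = g i x := by
  have hagree : ∀ i j, ∀ x ∈ K i, x ∈ K j → g i x = g j x := fun i j x hi hj => by
    obtain ⟨k, hik, hjk⟩ := hdir i j
    rw [hg i k hik x hi, hg j k hjk x hj]
  choose c hc using hcover
  refine ⟨{ toFun := fun x => ⟨g (c x x.2) x, hgN _ _ (hc x x.2)⟩
            map_add' := fun x y => ?_
            map_smul' := fun r x => ?_ }, fun i x hx => hagree _ _ _ (hc x x.2) hx⟩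
  · obtain ⟨k, hxk, hyk⟩ := hdir (c x x.2) (c y y.2)
    have hx : (x : M) ∈ K k := hxk (hc x x.2)
    have hy : (y : M) ∈ K k := hyk (hc y y.2)
    refine Subtype.ext ((hagree _ k _ (hc _ (x + y).2) (add_mem hx hy)).trans ?_)
    rw [Submodule.coe_add, map_add, hagree k _ _ hx (hc x x.2), hagree k _ _ hy (hc y y.2)]
    rfl
  · have hrx := Submodule.smul_mem _ r (hc x x.2)
    refine Subtype.ext ((hagree _ _ _ (hc _ (r • x).2) hrx).trans ?_)
    rw [Submodule.coe_smul, map_smul]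
    rfl

theorem exists_isIdempotentElem_range_eq_sup
    (hcomm : ∀ e : Module.End R M, IsIdempotentElem e → ∀ f, Commute e f)
    {ε δ : Module.End R M} (hε : IsIdempotentElem ε) (hδ : IsIdempotentElem δ) :
    ∃ γ : Module.End R M, IsIdempotentElem γ ∧ range γ = range ε ⊔ range δ := by
  have hc := hcomm ε hε δ
  have hγ := hε.add_sub_mul_of_commute hc hδ
  refine ⟨ε + δ - ε * δ, hγ, le_antisymm ?_ (sup_le ?_ ?_)⟩
  · rintro _ ⟨x, rfl⟩
    have : (ε + δ - ε * δ) x = ε (x - δ x) + δ x := by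
      rw [LinearMap.sub_apply, LinearMap.add_apply, Module.End.mul_apply, map_sub]; abel
    rw [this]
    exact add_mem (Submodule.mem_sup_left ⟨_, rfl⟩) (Submodule.mem_sup_right ⟨_, rfl⟩)
  · rw [← hγ.comp_eq_right_iff, ← Module.End.mul_eq_comp, sub_mul, add_mul, hε.eq, mul_assoc,
      ← hc.eq, ← mul_assoc, hε.eq, add_sub_cancel_right]
  · rw [← hγ.comp_eq_right_iff, ← Module.End.mul_eq_comp, sub_mul, add_mul, hδ.eq, mul_assoc,
      hδ.eq, add_sub_cancel_left]

theorem directed_range_isIdempotentElem {N : Submodule R M}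
    (hcomm : ∀ e : Module.End R M, IsIdempotentElem e → ∀ f, Commute e f) :
    Directed (· ≤ ·)
      fun ε : {ε : Module.End R M // IsIdempotentElem ε ∧ range ε ≤ N} => range ε.1 := by
  rintro ⟨ε, hε, hεN⟩ ⟨δ, hδ, hδN⟩
  obtain ⟨γ, hγ, hγr⟩ := exists_isIdempotentElem_range_eq_sup hcomm hε hδ
  exact ⟨⟨γ, hγ, hγr ▸ sup_le hεN hδN⟩, le_sup_left.trans hγr.ge, le_sup_right.trans hγr.ge⟩

theorem range_mul_eq_of_mul_mul_eq_self {f t : Module.End R M} (h : f * t * f = f) :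
    range (f * t) = range f := by
  refine le_antisymm (range_comp_le_range t f) ?_
  conv_lhs => rw [← h]
  exact range_comp_le_range f (f * t)

theorem IsMGenerated.exists_isIdempotentElem_mem_range (hM : IsAbelianEndoregular R M)
    {N : Submodule R M} (hN : IsMGenerated N) {x : M} (hx : x ∈ N) :
    ∃ ε : Module.End R M, IsIdempotentElem ε ∧ range ε ≤ N ∧ x ∈ range ε := by
  rw [hN] at hx
  induction hx using Submodule.iSup_induction' with
  | mem f y hy =>
    obtain ⟨t, ht⟩ := hM.1 f.1
    refine ⟨f.1 * t, ?_, ?_, ?_⟩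
    · rw [IsIdempotentElem, ← mul_assoc, ht]
    · exact (range_mul_eq_of_mul_mul_eq_self ht).le.trans f.2
    · rwa [range_mul_eq_of_mul_mul_eq_self ht]
  | zero => exact ⟨0, .zero, by simp, zero_mem _⟩
  | add y z _ _ hy hz =>
    obtain ⟨ε, hε, hεN, hyε⟩ := hy
    obtain ⟨δ, hδ, hδN, hzδ⟩ := hz
    obtain ⟨γ, hγ, hγr⟩ := exists_isIdempotentElem_range_eq_sup hM.2 hε hδ
    refine ⟨γ, hγ, hγr ▸ sup_le hεN hδN, hγr ▸ add_mem ?_ ?_⟩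
    exacts [Submodule.mem_sup_left hyε, Submodule.mem_sup_right hzδ]

end Idempotents

namespace Submodule

variable {R M : Type*} [Ring R] [AddCommGroup M] [Module R M] (N : Submodule R M)
  {ε : Module.End R M} (hεN : LinearMap.range ε ≤ N)

/-- The paper's restriction map `End_R(N) → End_R(ε M)`, viewed inside `End_R(M)`. -/
def compress (u : Module.End R N) : Module.End R M :=
  N.subtype ∘ₗ u ∘ₗ ε.codRestrict N fun x => hεN (LinearMap.mem_range_self ε x)

variable {N hεN}

theorem compress_apply (u : Module.End R N) (x : M) :
    N.compress hεN u x = u ⟨ε x, hεN (LinearMap.mem_range_self ε x)⟩ :=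
  rfl

theorem compress_apply_of_apply_eq (u : Module.End R N) {x : N} (hx : ε x = x) :
    N.compress hεN u x = u x :=
  congrArg (fun y => (u y : M)) (Subtype.ext hx)

theorem compress_mul_of_mul_eq {γ : Module.End R M} (hγN : LinearMap.range γ ≤ N)
    (h : γ * ε = ε) (u : Module.End R N) : N.compress hγN u * ε = N.compress hεN u := by
  ext x
  exact congrArg (fun y => (u y : M)) (Subtype.ext (LinearMap.congr_fun h x))

theorem compress_mul_self (hε : IsIdempotentElem ε) (u : Module.End R N) :
    N.compress hεN u * ε = N.compress hεN u :=
  compress_mul_of_mul_eq hεN hε.eq u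

theorem mul_compress (hε : IsIdempotentElem ε) (hc : ∀ f, Commute ε f) (u : Module.End R N) :
    ε * N.compress hεN u = N.compress hεN u := by
  rw [(hc _).eq, compress_mul_self hε]

theorem compress_mul (hε : IsIdempotentElem ε) (hc : ∀ f, Commute ε f) (u v : Module.End R N) :
    N.compress hεN (u * v) = N.compress hεN u * N.compress hεN v := by
  ext x
  have hfix := LinearMap.congr_fun (mul_compress (hεN := hεN) hε hc v) x
  rw [Module.End.mul_apply, compress_apply v x] at hfix ⊢
  rw [compress_apply_of_apply_eq u hfix]
  rfl

end Submodule

section Main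

variable {R M : Type*} [Ring R] [AddCommGroup M] [Module R M] {N : Submodule R M}

open LinearMap Submodule

theorem Submodule.eq_mul_of_isGroupInverse_compress
    (hcomm : ∀ e : Module.End R M, IsIdempotentElem e → ∀ f, Commute e f)
    {ε γ : Module.End R M} (hε : IsIdempotentElem ε) (hεN : range ε ≤ N) (hγN : range γ ≤ N)
    (hεγ : γ * ε = ε) {s : Module.End R N} {b b' : Module.End R M}
    (hb : IsGroupInverse (N.compress hγN s) b) (hb' : IsGroupInverse (N.compress hεN s) b') :
    b' = b * ε := by
  refine hb'.unique hcomm ?_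
  rw [← compress_mul_of_mul_eq hγN hεγ]
  exact hb.mul_right_of_central hε (hcomm ε hε)

theorem IsMGenerated.commute_of_isIdempotentElem (hM : IsAbelianEndoregular R M)
    (hN : IsMGenerated N) {e : Module.End R N} (he : IsIdempotentElem e) (s : Module.End R N) :
    Commute e s := by
  ext x
  obtain ⟨ε, hε, hεN, hx⟩ := hN.exists_isIdempotentElem_mem_range hM x.2
  have hc : ∀ f, Commute ε f := hM.2 ε hε
  have hidem : IsIdempotentElem (N.compress hεN e) := by
    rw [IsIdempotentElem, ← compress_mul hε hc, he.eq]
  have key : N.compress hεN (e * s) = N.compress hεN (s * e) := by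
    rw [compress_mul hε hc, compress_mul hε hc]
    exact hM.2 _ hidem _
  rw [← compress_apply_of_apply_eq (hεN := hεN) _ (hε.mem_range_iff.1 hx), key,
    compress_apply_of_apply_eq _ (hε.mem_range_iff.1 hx)]

theorem IsMGenerated.exists_mul_mul_eq_self (hM : IsAbelianEndoregular R M)
    (hN : IsMGenerated N) (s : Module.End R N) : ∃ t, s * t * s = s := by
  let ι := {ε : Module.End R M // IsIdempotentElem ε ∧ range ε ≤ N}
  choose g hg using fun ε : ι => exists_isGroupInverse hM.1 hM.2 (N.compress ε.2.2 s)
  have hmono (ε γ : ι) (h : range ε.1 ≤ range γ.1) : g ε = g γ * ε.1 :=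
    eq_mul_of_isGroupInverse_compress hM.2 ε.2.1 ε.2.2 γ.2.2
      ((γ.2.1.comp_eq_right_iff _).2 h) (hg γ) (hg ε)
  have hfix (ε : ι) : ε.1 * g ε = g ε := by
    rw [hM.2 _ ε.2.1, ← hmono ε ε le_rfl]
  obtain ⟨t, ht⟩ := exists_linearMap_eq_of_directed (directed_range_isIdempotentElem hM.2)
    (fun x hx => by
      obtain ⟨ε, hε, hεN, hxε⟩ := hN.exists_isIdempotentElem_mem_range hM hx
      exact ⟨⟨ε, hε, hεN⟩, hxε⟩)
    g (fun ε γ h x hx => by rw [hmono ε γ h, Module.End.mul_apply, ε.2.1.mem_range_iff.1 hx])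
    (fun ε x _ => ε.2.2 (hfix ε ▸ mem_range_self _ _))
  refine ⟨t, LinearMap.ext fun x => Subtype.ext ?_⟩
  obtain ⟨ε, hε, hεN, hxε⟩ := hN.exists_isIdempotentElem_mem_range hM x.2
  let εi : ι := ⟨ε, hε, hεN⟩
  have hsx : (s x : M) = N.compress hεN s x :=
    (compress_apply_of_apply_eq s (hε.mem_range_iff.1 hxε)).symm
  have hsxε : (s x : M) ∈ range ε :=
    hsx ▸ mul_compress hε (hM.2 ε hε) s ▸ mem_range_self _ _
  have htsx : (t (s x) : M) = g εi (s x) := ht εi (s x) hsxε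
  have htsxε : (t (s x) : M) ∈ range ε := htsx ▸ hfix εi ▸ mem_range_self _ _
  calc ((s * t * s) x : M) = N.compress hεN s (t (s x)) :=
        (compress_apply_of_apply_eq s (hε.mem_range_iff.1 htsxε)).symm
    _ = (N.compress hεN s * g εi * N.compress hεN s) x := by rw [htsx, hsx]; rfl
    _ = s x := by rw [(hg εi).mul_inv_mul, hsx]

end Main

theorem stmt_14 {R M : Type*} [Ring R] [AddCommGroup M] [Module R M]
    (hM : IsAbelianEndoregular R M) (N : Submodule R M) (hN : IsMGenerated N) :
    IsAbelianEndoregular R N :=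
  ⟨hN.exists_mul_mul_eq_self hM, fun _ he => hN.commute_of_isIdempotentElem hM he⟩
end

section
/- Let M be a quasi-duo R-module which is a subdirect product of simple modules. Then every idempotent in End_R(M) is central. In particular, if M is additionally endoregular, then M is abelian endoregular. -/
theorem IsIdempotentElem.commute_of_isReduced {A : Type*} [Ring A] [IsReduced A] {e : A}
    (he : IsIdempotentElem e) (s : A) : Commute e s := by
  have hleft : e * s * (1 - e) = 0 := IsReduced.eq_zero _ ⟨2, by
    rw [pow_two, show e * s * (1 - e) * (e * s * (1 - e)) = e * s * ((1 - e) * e) * (s * (1 - e))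
      by noncomm_ring, he.one_sub_mul_self, mul_zero, zero_mul]⟩
  have hright : (1 - e) * s * e = 0 := IsReduced.eq_zero _ ⟨2, by
    rw [pow_two, show (1 - e) * s * e * ((1 - e) * s * e) = (1 - e) * s * (e * (1 - e)) * (s * e)
      by noncomm_ring, he.mul_one_sub_self, mul_zero, zero_mul]⟩
  rw [mul_one_sub, sub_eq_zero] at hleft
  rw [one_sub_mul, sub_mul, sub_eq_zero] at hright
  exact hleft.trans hright.symm

namespace Module

variable {R M : Type*} [Ring R] [AddCommGroup M] [Module R M]

theorem range_le_of_isCoatom_of_mul_self_eq_zero {N : Submodule R M} (hN : IsCoatom N)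
    {φ : End R M} (hφN : N.map φ ≤ N) (hφ : φ * φ = 0) : LinearMap.range φ ≤ N := by
  by_contra hle
  have hsup : N ⊔ LinearMap.range φ = ⊤ := hN.2 _ (left_lt_sup.2 hle)
  apply hle
  calc LinearMap.range φ = (N ⊔ LinearMap.range φ).map φ := by rw [hsup, Submodule.map_top]
    _ = N.map φ ⊔ LinearMap.range (φ * φ) := by
      rw [Submodule.map_sup, Module.End.mul_eq_comp, LinearMap.range_comp]
    _ ≤ N := by rw [hφ, LinearMap.range_zero, sup_bot_eq]; exact hφN

theorem isReduced_end_of_jacobson_eq_bot (hJ : jacobson R M = ⊥)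
    (hqd : ∀ N : Submodule R M, IsCoatom N → ∀ φ : End R M, N.map φ ≤ N) :
    IsReduced (End R M) := by
  refine (isReduced_iff_pow_one_lt 2 one_lt_two).2 fun φ hφ ↦ ?_
  rw [pow_two] at hφ
  have hrange : LinearMap.range φ ≤ jacobson R M :=
    le_sInf fun N hN ↦ range_le_of_isCoatom_of_mul_self_eq_zero hN (hqd N hN φ) hφ
  rwa [hJ, le_bot_iff, LinearMap.range_eq_bot] at hrange

end Module

theorem stmt_18_general {R M : Type*} [Ring R] [AddCommGroup M] [Module R M]
    {ι : Type*} (S : ι → Type*) [∀ j, AddCommGroup (S j)] [∀ j, Module R (S j)]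
    (hsimple : ∀ j, IsSimpleModule R (S j))
    (α : M →ₗ[R] ∀ j, S j) (hα : Function.Injective α)
    (hqd : ∀ N : Submodule R M, IsCoatom N → ∀ φ : Module.End R M, N.map φ ≤ N) :
    (∀ e : Module.End R M, e * e = e → ∀ s : Module.End R M, e * s = s * e) ∧
      ((∀ s : Module.End R M, ∃ t : Module.End R M, s * t * s = s) →
        IsAbelianEndoregular R M) := by
  have hJ : Module.jacobson R M = ⊥ := Module.jacobson_eq_bot_of_injective α hα <|
    Module.jacobson_pi_eq_bot _ _ fun j ↦ IsSimpleModule.jacobson_eq_bot R (S j)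
  have := Module.isReduced_end_of_jacobson_eq_bot hJ hqd
  have central : ∀ e : Module.End R M, e * e = e → ∀ s, e * s = s * e :=
    fun e he s ↦ (IsIdempotentElem.commute_of_isReduced he s).eq
  exact ⟨central, fun hreg ↦ ⟨hreg, central⟩⟩

theorem stmt_18 {R M : Type*} [Ring R] [AddCommGroup M] [Module R M]
    {ι : Type*} (S : ι → Type*) [∀ j, AddCommGroup (S j)] [∀ j, Module R (S j)]
    (hsimple : ∀ j, IsSimpleModule R (S j))
    (α : M →ₗ[R] ∀ j, S j) (hα : Function.Injective α)
    (hsurj : ∀ j, Function.Surjective ((LinearMap.proj j).comp α : M →ₗ[R] S j))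
    (hqd : ∀ N : Submodule R M, IsCoatom N → ∀ φ : Module.End R M, N.map φ ≤ N) :
    (∀ e : Module.End R M, e * e = e → ∀ s : Module.End R M, e * s = s * e) ∧
      ((∀ s : Module.End R M, ∃ t : Module.End R M, s * t * s = s) →
        IsAbelianEndoregular R M) :=
  stmt_18_general S hsimple α hα hqd
end
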